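/- Let G be a bipartite graph with vertex weights w : V(G) → ℕ₊ and let z be a maximum w-matching. If w(v) > z(E_v) for some vertex v (i.e., vertex v is not saturated by z), then no minimum-weight vertex cover of (G, w) contains v. -/

import Mathlib

open Finset

variable {V : Type*}

variable {V : Type*}

/-- A set of vertices covering every edge. -/
def IsVertexCover (G : SimpleGraph V) (C : Finset V) : Prop :=
  ∀ ⦃u v : V⦄, G.Adj u v → u ∈ C ∨ v ∈ C

/-- A minimum-weight vertex cover for vertex weights `w`. -/
def IsMinVertexCover [Fintype V] (G : SimpleGraph V) (w : V → ℕ) (C : Finset V) : Prop :=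
  IsVertexCover G C ∧
    ∀ C' : Finset V, IsVertexCover G C' → ∑ x ∈ C, w x ≤ ∑ x ∈ C', w x

/-- A `w`-matching: an assignment of naturals to edges whose total at each vertex is at
most the vertex weight. -/
def IsWMatching [Fintype V] [DecidableEq V] (G : SimpleGraph V) [DecidableRel G.Adj]
    (w : V → ℕ) (z : Sym2 V → ℕ) : Prop :=
  ∀ v : V, ∑ e ∈ G.edgeFinset.filter (fun e => v ∈ e), z e ≤ w v

/-- A maximum `w`-matching: a `w`-matching of maximum total value. -/
def IsMaxWMatching [Fintype V] [DecidableEq V] (G : SimpleGraph V) [DecidableRel G.Adj]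
    (w : V → ℕ) (z : Sym2 V → ℕ) : Prop :=
  IsWMatching G w z ∧
    ∀ z' : Sym2 V → ℕ, IsWMatching G w z' →
      ∑ e ∈ G.edgeFinset, z' e ≤ ∑ e ∈ G.edgeFinset, z e

/-
If `v` lay in a minimum cover `C`, consider the vertices `A` (even) and `B` (odd) reachable from
`v` by alternating walks whose returning edges carry positive value. Every vertex of `B` is
saturated, since otherwise shifting value along the walk would yield a larger `w`-matching. Then
`(C \ A) ∪ (B \ C)` is again a cover, and double counting the value of the edges leaving
`B \ C` gives `w(B \ C) ≤ z(B \ C) ≤ z(A ∩ C) < w(A ∩ C)`, the last step strict because `v` is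
unsaturated. So the new cover is lighter than `C`.
-/

section Finset

variable [DecidableEq V]

lemma card_filter_mem_sym2 (S : Finset V) {x y : V} (hxy : x ≠ y) :
    #{t ∈ S | t ∈ s(x, y)} = (if x ∈ S then 1 else 0) + (if y ∈ S then 1 else 0) := by
  rw [card_filter, ← sum_ite_eq' S x (fun _ => 1), ← sum_ite_eq' S y (fun _ => 1),
    ← sum_add_distrib]
  refine sum_congr rfl fun t _ => ?_
  by_cases htx : t = x <;> by_cases hty : t = y <;> simp_all

lemma sum_sdiff_union_sdiff_lt {C A B : Finset V} {w : V → ℕ}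
    (h : ∑ x ∈ B \ C, w x < ∑ x ∈ A ∩ C, w x) :
    ∑ x ∈ C \ A ∪ B \ C, w x < ∑ x ∈ C, w x := by
  rw [sum_union (disjoint_sdiff.mono_left sdiff_subset), ← sum_inter_add_sum_sdiff C A,
    inter_comm]
  omega

lemma IsVertexCover.sdiff_union {G : SimpleGraph V} {C A B : Finset V} (hC : IsVertexCover G C)
    (hAB : ∀ x y, G.Adj x y → x ∈ A → y ∈ B) (hdisj : Disjoint A B) :
    IsVertexCover G (C \ A ∪ B \ C) := by
  have hcover_of_mem : ∀ x y, G.Adj x y → x ∈ C → x ∈ C \ A ∪ B \ C ∨ y ∈ C \ A ∪ B \ C := by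
    intro x y hxy hxC
    by_cases hxA : x ∈ A
    · have hyB := hAB x y hxy hxA
      have hyA : y ∉ A := disjoint_right.mp hdisj hyB
      right
      by_cases hyC : y ∈ C <;> simp [*]
    · left
      simp [*]
  intro x y hxy
  rcases hC hxy with hx | hy
  · exact hcover_of_mem x y hxy hx
  · exact (hcover_of_mem y x hxy.symm hy).symm

end Finset

section WMatching

variable [Fintype V] [DecidableEq V] {G : SimpleGraph V} [DecidableRel G.Adj]
  {w : V → ℕ} {z : Sym2 V → ℕ}

variable (G) in
def incidentSum (z : Sym2 V → ℕ) (x : V) : ℕ :=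
  ∑ e ∈ G.edgeFinset.filter (fun e => x ∈ e), z e

lemma incidentSum_add (z z' : Sym2 V → ℕ) (x : V) :
    incidentSum G (z + z') x = incidentSum G z x + incidentSum G z' x :=
  sum_add_distrib

lemma incidentSum_single {e : Sym2 V} (he : e ∈ G.edgeFinset) (k : ℕ) (x : V) :
    incidentSum G (Pi.single e k) x = if x ∈ e then k else 0 := by
  simp [incidentSum, sum_pi_single', he]

lemma sum_single_of_mem {e : Sym2 V} (he : e ∈ G.edgeFinset) (k : ℕ) :
    ∑ e' ∈ G.edgeFinset, Pi.single e k e' = k := by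
  rw [sum_pi_single', if_pos he]

lemma sum_incidentSum (z : Sym2 V → ℕ) (S : Finset V) :
    ∑ x ∈ S, incidentSum G z x = ∑ e ∈ G.edgeFinset, z e * #{x ∈ S | x ∈ e} := by
  simp_rw [incidentSum, sum_filter]
  rw [sum_comm]
  refine sum_congr rfl fun e _ => ?_
  rw [← sum_filter, sum_const, smul_eq_mul, mul_comm]

/-- Double counting: an edge of positive value meeting `T` meets it once and also meets `S`. -/
lemma sum_incidentSum_le {S T : Finset V}
    (h : ∀ x y, G.Adj x y → 0 < z s(x, y) → x ∈ T → y ∈ S \ T) :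
    ∑ x ∈ T, incidentSum G z x ≤ ∑ x ∈ S, incidentSum G z x := by
  rw [sum_incidentSum, sum_incidentSum]
  refine sum_le_sum fun e he => ?_
  induction e using Sym2.ind with
  | _ x y =>
    have hxy : G.Adj x y := SimpleGraph.mem_edgeFinset.mp he
    rcases Nat.eq_zero_or_pos (z s(x, y)) with hzero | hpos
    · simp [hzero]
    have := h x y hxy hpos
    have := h y x hxy.symm (Sym2.eq_swap ▸ hpos)
    rw [card_filter_mem_sym2 _ hxy.ne, card_filter_mem_sym2 _ hxy.ne]
    gcongr z s(x, y) * ?_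
    split_ifs <;> simp_all

lemma IsMaxWMatching.le_incidentSum_of_adj (hz : IsMaxWMatching G w z) {x y : V}
    (hxy : G.Adj x y) (hx : incidentSum G z x < w x) : w y ≤ incidentSum G z y := by
  by_contra! hy
  have he : s(x, y) ∈ G.edgeFinset := SimpleGraph.mem_edgeFinset.mpr hxy
  have hmatch : IsWMatching G w (z + Pi.single s(x, y) 1) := by
    intro t
    change incidentSum G _ t ≤ w t
    rw [incidentSum_add, incidentSum_single he]
    split_ifs with ht
    · rcases Sym2.mem_iff.mp ht with rfl | rfl <;> omega
    · exact hz.1 t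
  have := hz.2 _ hmatch
  rw [Pi.add_def, sum_add_distrib, sum_single_of_mem he] at this
  omega

/-- The witness moves one unit of value from the edge `b₀a` to the edge `ab`. -/
lemma IsMaxWMatching.exists_shift (hz : IsMaxWMatching G w z) {a b b₀ : V}
    (hab : G.Adj a b) (hb₀a : G.Adj b₀ a) (hpos : 0 < z s(b₀, a))
    (hb : incidentSum G z b < w b) :
    ∃ z', IsMaxWMatching G w z' ∧ (∀ x ≠ b, incidentSum G z' x ≤ incidentSum G z x) ∧
      incidentSum G z' b₀ < w b₀ ∧ ∀ e ≠ s(b₀, a), 0 < z e → 0 < z' e := by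
  have he₁ : s(a, b) ∈ G.edgeFinset := SimpleGraph.mem_edgeFinset.mpr hab
  have he₂ : s(b₀, a) ∈ G.edgeFinset := SimpleGraph.mem_edgeFinset.mpr hb₀a
  set z' := z + Pi.single s(a, b) 1 - Pi.single s(b₀, a) 1
  have hz' : z' + Pi.single s(b₀, a) 1 = z + Pi.single s(a, b) 1 := by
    ext e
    simp only [z', Pi.add_apply, Pi.sub_apply, Pi.single_apply]
    split_ifs <;> subst_vars <;> omega
  have hdeg (x : V) :
      incidentSum G z' x + (if x ∈ s(b₀, a) then 1 else 0) =
        incidentSum G z x + (if x ∈ s(a, b) then 1 else 0) := by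
    rw [← incidentSum_single he₂, ← incidentSum_single he₁, ← incidentSum_add,
      ← incidentSum_add, hz']
  have hle (x : V) (hx : x ≠ b) : incidentSum G z' x ≤ incidentSum G z x := by
    have := hdeg x
    have : x ∈ s(a, b) → x ∈ s(b₀, a) := by simp_all
    split_ifs at * <;> grind
  refine ⟨z', ⟨fun x => ?_, fun z'' hz'' => ?_⟩, hle, ?_, fun e he hpos => ?_⟩
  · change incidentSum G z' x ≤ w x
    by_cases hx : x = b
    · subst hx
      have := hdeg x
      rw [if_pos (Sym2.mem_mk_right a x)] at this
      omega
    · exact (hle x hx).trans (hz.1 x)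
  · have htotal : ∑ e ∈ G.edgeFinset, z' e = ∑ e ∈ G.edgeFinset, z e := by
      have := congrArg (fun f => ∑ e ∈ G.edgeFinset, f e) hz'
      simp only [Pi.add_apply, sum_add_distrib, sum_single_of_mem he₁, sum_single_of_mem he₂]
        at this
      omega
    exact htotal ▸ hz.2 z'' hz''
  · have hb₀ := hdeg b₀
    rw [if_pos (Sym2.mem_mk_left b₀ a)] at hb₀
    by_cases hb₀b : b₀ = b
    · subst hb₀b
      rw [if_pos (Sym2.mem_mk_right a b₀)] at hb₀
      omega
    · rw [if_neg (by simp [hb₀a.ne, hb₀b])] at hb₀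
      have : incidentSum G z b₀ ≤ w b₀ := hz.1 b₀
      omega
  · simp only [z', Pi.add_apply, Pi.sub_apply, Pi.single_apply, if_neg he]
    omega

end WMatching

/-- Alternating walks from `v`, indexed by the parity of their length (`true` = odd) and the
length. -/
inductive AltReach (G : SimpleGraph V) (z : Sym2 V → ℕ) (v : V) : Bool → V → ℕ → Prop
  | refl : AltReach G z v false v 0
  | step_any {a b : V} {n : ℕ} :
      AltReach G z v false a n → G.Adj a b → AltReach G z v true b (n + 1)
  | step_pos {b a : V} {n : ℕ} :
      AltReach G z v true b n → G.Adj b a → 0 < z s(b, a) → AltReach G z v false a (n + 1)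

namespace AltReach

variable {G : SimpleGraph V} {z z' : Sym2 V → ℕ} {v : V} {p : Bool} {x : V} {n : ℕ}

lemma color (c : G.Coloring (Fin 2)) (h : AltReach G z v p x n) :
    cond p (c x ≠ c v) (c x = c v) := by
  induction h with
  | refl => rfl
  | step_any _ hab ih => exact fun hbv => c.valid hab (ih.trans hbv.symm)
  | step_pos _ hba _ ih =>
    have := c.valid hba
    simp only [cond] at ih ⊢
    omega

lemma mono_or_exists_lt {a₀ b₀ : V} (c : G.Coloring (Fin 2)) (ha₀ : c a₀ = c v)
    (hz' : ∀ e ≠ s(b₀, a₀), 0 < z e → 0 < z' e) (h : AltReach G z v p x n) :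
    AltReach G z' v p x n ∨ ∃ m < n, AltReach G z v true b₀ m := by
  induction h with
  | refl => exact Or.inl refl
  | step_any _ hab ih =>
    rcases ih with h' | ⟨m, hm, h'⟩
    · exact Or.inl (h'.step_any hab)
    · exact Or.inr ⟨m, by omega, h'⟩
  | @step_pos b a n hb hba hpos ih =>
    by_cases he : s(b, a) = s(b₀, a₀)
    · rcases Sym2.eq_iff.mp he with ⟨rfl, -⟩ | ⟨rfl, -⟩
      · exact Or.inr ⟨n, n.lt_succ_self, hb⟩
      · exact absurd ha₀ (hb.color c)
    · rcases ih with h' | ⟨m, hm, h'⟩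
      · exact Or.inl (h'.step_pos hba (hz' _ he hpos))
      · exact Or.inr ⟨m, by omega, h'⟩

/-- A shortest alternating walk to `b₀` does not use the edge `b₀a₀`, so it survives. -/
lemma exists_le_mono {a₀ b₀ : V} {k : ℕ} (c : G.Coloring (Fin 2)) (ha₀ : c a₀ = c v)
    (hz' : ∀ e ≠ s(b₀, a₀), 0 < z e → 0 < z' e) (h : AltReach G z v true b₀ k) :
    ∃ m ≤ k, AltReach G z' v true b₀ m := by
  classical
  have hex : ∃ m, AltReach G z v true b₀ m := ⟨k, h⟩
  rcases mono_or_exists_lt c ha₀ hz' (Nat.find_spec hex) with h' | ⟨m, hm, h'⟩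
  · exact ⟨_, Nat.find_le h, h'⟩
  · exact absurd h' (Nat.find_min hex hm)

/-- Shifting along the last two edges (`IsMaxWMatching.exists_shift`) gives another maximum
`w`-matching with a shorter walk to an unsaturated odd vertex; a walk of length one would be an
augmenting edge. -/
theorem le_incidentSum [Fintype V] [DecidableEq V] [DecidableRel G.Adj] {w : V → ℕ}
    (c : G.Coloring (Fin 2)) (n : ℕ) :
    ∀ z, IsMaxWMatching G w z → incidentSum G z v < w v →
      ∀ b, AltReach G z v true b n → w b ≤ incidentSum G z b := by
  induction n using Nat.strong_induction_on with
  | _ n ih =>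
  intro z hz hv b hb
  by_contra! hb_unsat
  cases hb with
  | step_any ha hab =>
    cases ha with
    | refl => exact (hz.le_incidentSum_of_adj hab hv).not_gt hb_unsat
    | @step_pos b₀ a k hb₀ hb₀a hpos =>
      obtain ⟨z', hz', hle, hb₀_unsat, hpos'⟩ := hz.exists_shift hab hb₀a hpos hb_unsat
      have ha := hb₀.step_pos hb₀a hpos
      have hvb : v ≠ b := fun hvb => (ha.step_any hab).color c (hvb ▸ rfl)
      obtain ⟨m, hm, h'⟩ := hb₀.exists_le_mono c (ha.color c) hpos'
      exact (ih m (by omega) z' hz' ((hle v hvb).trans_lt hv) b₀ h').not_gt hb₀_unsat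

open Classical in
noncomputable def finset [Fintype V] (G : SimpleGraph V) (z : Sym2 V → ℕ) (v : V) (p : Bool) :
    Finset V :=
  {x | ∃ n, AltReach G z v p x n}

lemma mem_finset [Fintype V] : x ∈ finset G z v p ↔ ∃ n, AltReach G z v p x n := by
  simp [finset]

lemma disjoint_finset [Fintype V] (c : G.Coloring (Fin 2)) :
    Disjoint (finset G z v false) (finset G z v true) :=
  disjoint_left.mpr fun _ hA hB => by
    obtain ⟨⟨n, hn⟩, ⟨m, hm⟩⟩ := And.intro (mem_finset.mp hA) (mem_finset.mp hB)
    exact hm.color c (hn.color c)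

end AltReach

theorem stmt_4_general [Fintype V] [DecidableEq V] (G : SimpleGraph V) [DecidableRel G.Adj]
    (hbip : G.Colorable 2) (w : V → ℕ)
    (z : Sym2 V → ℕ) (hz : IsMaxWMatching G w z)
    (v : V) (hv : ∑ e ∈ G.edgeFinset.filter (fun e => v ∈ e), z e < w v)
    (C : Finset V) (hC : IsMinVertexCover G w C) :
    v ∉ C := by
  intro hvC
  obtain ⟨c⟩ := hbip
  set A := AltReach.finset G z v false
  set B := AltReach.finset G z v true
  have hAB : Disjoint A B := AltReach.disjoint_finset c
  have hcover : IsVertexCover G (C \ A ∪ B \ C) := hC.1.sdiff_union (fun x y hxy hx =>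
    have ⟨n, hn⟩ := AltReach.mem_finset.mp hx; AltReach.mem_finset.mpr ⟨n + 1, hn.step_any hxy⟩)
    hAB
  have hback : ∀ x y, G.Adj x y → 0 < z s(x, y) → x ∈ B \ C → y ∈ (A ∩ C) \ (B \ C) := by
    intro x y hxy hpos hx
    rw [mem_sdiff] at hx
    obtain ⟨n, hn⟩ := AltReach.mem_finset.mp hx.1
    have hyA : y ∈ A := AltReach.mem_finset.mpr ⟨n + 1, hn.step_pos hxy hpos⟩
    have hyC : y ∈ C := (hC.1 hxy).resolve_left hx.2
    simp [hyA, hyC, disjoint_left.mp hAB hyA]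
  have hlt : ∑ x ∈ B \ C, w x < ∑ x ∈ A ∩ C, w x := calc
    _ ≤ ∑ x ∈ B \ C, incidentSum G z x := sum_le_sum fun b hb =>
          have ⟨n, hn⟩ := AltReach.mem_finset.mp (mem_sdiff.mp hb).1
          AltReach.le_incidentSum c n z hz hv b hn
    _ ≤ ∑ x ∈ A ∩ C, incidentSum G z x := sum_incidentSum_le hback
    _ < ∑ x ∈ A ∩ C, w x := sum_lt_sum (fun x _ => hz.1 x)
          ⟨v, mem_inter.mpr ⟨AltReach.mem_finset.mpr ⟨0, .refl⟩, hvC⟩, hv⟩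
  exact (hC.2 _ hcover).not_gt (sum_sdiff_union_sdiff_lt hlt)

/-- If vertex `v` is unsaturated by a maximum `w`-matching of a bipartite
graph (its weight exceeds the total matching value on incident edges), then no
minimum-weight vertex cover contains `v`. -/
theorem stmt_4 [Fintype V] [DecidableEq V] (G : SimpleGraph V) [DecidableRel G.Adj]
    (hbip : G.Colorable 2) (w : V → ℕ) (hw : ∀ x, 0 < w x)
    (z : Sym2 V → ℕ) (hz : IsMaxWMatching G w z)
    (v : V) (hv : ∑ e ∈ G.edgeFinset.filter (fun e => v ∈ e), z e < w v)
    (C : Finset V) (hC : IsMinVertexCover G w C) :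
    v ∉ C :=
  stmt_4_general G hbip w z hz v hv C hC
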